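/- Let X be the vertex set of a simplex in ℝⁿ whose relative interior contains 0, spanning a subspace L of dimension |X| − 1. Then for every x ∈ X, the set X \ {x} is linearly independent and pos(X \ {x}) ∩ pos({−y : y ∈ X \ {x}}) = {0}; moreover the union over x ∈ X of pos(X \ {x}) equals L. -/

import Mathlib

open scoped RealInnerProductSpace
open Finset

noncomputable section

/-- The positive (conical) hull of a set of vectors: all nonnegative
linear combinations of finitely many elements of `V`. -/
def posHull {E : Type*} [AddCommGroup E] [Module ℝ E] (V : Set E) : Set E :=
  {y | ∃ (t : Finset E) (c : E → ℝ), ↑t ⊆ V ∧ (∀ z ∈ t, 0 ≤ c z) ∧ ∑ z ∈ t, c z • z = y}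

/-- A set of vectors is in conical position if it is strictly separated from `0`
and no element lies in the positive hull of the others. -/
def InConicalPos {n : ℕ} (S : Set (EuclideanSpace ℝ (Fin n))) : Prop :=
  (∃ v : EuclideanSpace ℝ (Fin n), ∀ s ∈ S, 0 < ⟪v, s⟫) ∧
    ∀ s ∈ S, s ∉ posHull (S \ {s})

lemma indep_sum_eq_zero' {E : Type*} [AddCommGroup E] [Module ℝ E] {A : Set E}
    (h : LinearIndependent ℝ (fun v : A => (v : E)))
    {t : Finset E} (ht : ↑t ⊆ A) {g : E → ℝ} (hg : ∑ z ∈ t, g z • z = 0) :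
    ∀ z ∈ t, g z = 0 := by
  have h2 : LinearIndependent ℝ (fun v : (↑t : Set E) => (v : E)) := LinearIndepOn.mono (R := ℝ) (v := id) h ht
  intro z hz
  have := Fintype.linearIndependent_iff.mp h2 (fun v => g v) ?_ ⟨z, hz⟩
  · exact this
  · rw [← hg]; exact Finset.sum_coe_sort t (fun z => g z • z)

lemma zero_mem_posHull' {E : Type*} [AddCommGroup E] [Module ℝ E] (V : Set E) :
    (0 : E) ∈ posHull V :=
  ⟨∅, 0, by simp, by simp, by simp⟩

/-- For the vertex set `X` of a simplex with `0` in its relative interior, spanning `L`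
of dimension `|X| - 1`: removing any vertex leaves a linearly independent set whose
positive hull meets its negative only at `0`, and these positive hulls cover `L`. -/
theorem stmt14 {n : ℕ} (X : Finset (EuclideanSpace ℝ (Fin n))) (hX : X.Nonempty)
    (μ : EuclideanSpace ℝ (Fin n) → ℝ) (hμ : ∀ x ∈ X, 0 < μ x)
    (hsum1 : ∑ x ∈ X, μ x = 1) (hzero : ∑ x ∈ X, μ x • x = 0)
    (hdim : Module.finrank ℝ
      (Submodule.span ℝ ((X : Set (EuclideanSpace ℝ (Fin n))))) = X.card - 1) :
    (∀ x ∈ X,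
      LinearIndependent ℝ
        (fun v : ((X : Set (EuclideanSpace ℝ (Fin n))) \ {x} : Set _) =>
          (v : EuclideanSpace ℝ (Fin n))) ∧
      posHull ((X : Set (EuclideanSpace ℝ (Fin n))) \ {x}) ∩
        posHull ((fun y => -y) '' ((X : Set (EuclideanSpace ℝ (Fin n))) \ {x})) = {0}) ∧
    (⋃ x ∈ X, posHull ((X : Set (EuclideanSpace ℝ (Fin n))) \ {x}))
      = (Submodule.span ℝ ((X : Set (EuclideanSpace ℝ (Fin n)))) :
          Set (EuclideanSpace ℝ (Fin n))) := by
  classical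
  -- linear independence of X \ {x}
  have hli : ∀ x ∈ X, LinearIndependent ℝ
      (fun v : ((X : Set (EuclideanSpace ℝ (Fin n))) \ {x} : Set _) =>
        (v : EuclideanSpace ℝ (Fin n))) := by
    intro x hx
    have hxmem : x ∈ Submodule.span ℝ
        ((X.erase x : Finset _) : Set (EuclideanSpace ℝ (Fin n))) := by
      have hsplit : μ x • x + ∑ y ∈ X.erase x, μ y • y = ∑ y ∈ X, μ y • y :=
        Finset.add_sum_erase X (fun y => μ y • y) hx
      have hxx : μ x • x = -∑ y ∈ X.erase x, μ y • y := by
        rw [hzero] at hsplit; linear_combination (norm := module) hsplit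
      have hmem : (∑ y ∈ X.erase x, μ y • y) ∈
          Submodule.span ℝ ((X.erase x : Finset _) : Set (EuclideanSpace ℝ (Fin n))) :=
        Submodule.sum_mem _ fun y hy =>
          Submodule.smul_mem _ _ (Submodule.subset_span (by exact_mod_cast hy))
      have heq : (μ x)⁻¹ • (-∑ y ∈ X.erase x, μ y • y) = x := by
        rw [← hxx, inv_smul_smul₀ (hμ x hx).ne']
      have h2 := Submodule.smul_mem
        (Submodule.span ℝ ((X.erase x : Finset _) : Set (EuclideanSpace ℝ (Fin n))))
        ((μ x)⁻¹) (Submodule.neg_mem _ hmem)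
      rwa [heq] at h2
    have hspan : Submodule.span ℝ ((X.erase x : Finset _) : Set (EuclideanSpace ℝ (Fin n)))
        = Submodule.span ℝ (X : Set (EuclideanSpace ℝ (Fin n))) := by
      apply le_antisymm
      · exact Submodule.span_mono (by simp [Finset.coe_erase, Set.diff_subset])
      · rw [Submodule.span_le]
        intro y hy
        rcases eq_or_ne y x with rfl | hne
        · exact hxmem
        · exact Submodule.subset_span (by
            simp only [Finset.coe_erase, Set.mem_diff, Set.mem_singleton_iff]
            exact ⟨hy, hne⟩)
    have hli' : LinearIndependent ℝ
        (fun v : ((X.erase x : Finset _) : Set (EuclideanSpace ℝ (Fin n))) =>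
          (v : EuclideanSpace ℝ (Fin n))) := by
      rw [linearIndependent_iff_card_eq_finrank_span]
      rw [Subtype.range_coe]
      have h1 : Fintype.card ((X.erase x : Finset _) : Set (EuclideanSpace ℝ (Fin n)))
          = (X.erase x).card := by
        simp only [Finset.coe_sort_coe, Fintype.card_coe]
      rw [h1, Finset.card_erase_of_mem hx]
      show _ = Module.finrank ℝ (Submodule.span ℝ _)
      rw [hspan, hdim]
    have hset : ((X.erase x : Finset _) : Set (EuclideanSpace ℝ (Fin n)))
        = (X : Set (EuclideanSpace ℝ (Fin n))) \ {x} := Finset.coe_erase x X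
    exact hset ▸ hli'
  constructor
  · intro x hx
    refine ⟨hli x hx, ?_⟩
    ext y
    simp only [Set.mem_inter_iff, Set.mem_singleton_iff]
    constructor
    · rintro ⟨⟨t, c, htA, hc, rfl⟩, ⟨s, d, hsA, hd, hsy⟩⟩
      set s' : Finset (EuclideanSpace ℝ (Fin n)) := s.image (fun w => -w) with hs'
      have hneg : ∀ w ∈ s, -w ∈ (X : Set (EuclideanSpace ℝ (Fin n))) \ {x} := by
        intro w hw
        rcases hsA hw with ⟨a, ha, rfl⟩
        simpa using ha
      have hsum_s : ∑ w ∈ s, d w • w = -∑ z ∈ s', d (-z) • z := by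
        rw [hs', Finset.sum_image (by intros a _ b _ h; exact neg_injective h)]
        simp [neg_smul, smul_neg]
      have hunion : ((t ∪ s' : Finset _) : Set (EuclideanSpace ℝ (Fin n)))
          ⊆ (X : Set (EuclideanSpace ℝ (Fin n))) \ {x} := by
        intro z hz
        rcases Finset.mem_union.mp hz with h | h
        · exact htA h
        · rcases Finset.mem_image.mp h with ⟨w, hw, rfl⟩
          exact hneg w hw
      have hsumg : ∑ z ∈ t ∪ s',
          ((if z ∈ t then c z else 0) + (if z ∈ s' then d (-z) else 0)) • z = 0 := by
        have h1 : ∑ z ∈ t ∪ s', (if z ∈ t then c z else 0) • z = ∑ z ∈ t, c z • z := by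
          simp only [ite_smul, zero_smul]
          rw [Finset.sum_ite_mem, Finset.union_inter_cancel_left]
        have h2 : ∑ z ∈ t ∪ s', (if z ∈ s' then d (-z) else 0) • z
            = ∑ z ∈ s', d (-z) • z := by
          simp only [ite_smul, zero_smul]
          rw [Finset.sum_ite_mem, Finset.union_inter_cancel_right]
        calc ∑ z ∈ t ∪ s', ((if z ∈ t then c z else 0) + (if z ∈ s' then d (-z) else 0)) • z
            = ∑ z ∈ t ∪ s', ((if z ∈ t then c z else 0) • z
              + (if z ∈ s' then d (-z) else 0) • z) := by
              refine Finset.sum_congr rfl fun z _ => ?_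
              rw [add_smul]
          _ = ∑ z ∈ t, c z • z + ∑ z ∈ s', d (-z) • z := by
              rw [Finset.sum_add_distrib, h1, h2]
          _ = 0 := by
              have h3 := hsy
              rw [hsum_s] at h3
              rw [← h3]; abel
      have hzero' := indep_sum_eq_zero' (hli x hx) hunion hsumg
      have hct : ∀ z ∈ t, c z = 0 := by
        intro z hz
        have h0 := hzero' z (Finset.mem_union_left _ hz)
        have ha : 0 ≤ (if z ∈ t then c z else 0) := by
          rw [if_pos hz]; exact hc z hz
        have hb : 0 ≤ (if z ∈ s' then d (-z) else 0) := by
          by_cases h : z ∈ s'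
          · rw [if_pos h]
            rcases Finset.mem_image.mp h with ⟨w, hw, rfl⟩
            rw [neg_neg]; exact hd w hw
          · rw [if_neg h]
        have hfin : (if z ∈ t then c z else 0) = 0 := by linarith
        rwa [if_pos hz] at hfin
      exact Finset.sum_eq_zero fun z hz => by rw [hct z hz, zero_smul]
    · rintro rfl
      exact ⟨zero_mem_posHull' _, zero_mem_posHull' _⟩
  · ext y
    simp only [Set.mem_iUnion, SetLike.mem_coe]
    constructor
    · rintro ⟨x, hx, t, c, htA, hc, rfl⟩
      exact Submodule.sum_mem _ fun z hz =>
        Submodule.smul_mem _ _ (Submodule.subset_span (htA hz).1)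
    · intro hy
      rcases Submodule.mem_span_finset.mp hy with ⟨f, -, hf⟩
      obtain ⟨b, hb, hbmax⟩ := Finset.exists_max_image X (fun z => -f z / μ z) hX
      have hμb : μ b ≠ 0 := (hμ b hb).ne'
      set T : ℝ := -f b / μ b with hT
      set d : EuclideanSpace ℝ (Fin n) → ℝ := fun z => f z + T * μ z with hd
      have hdb : d b = 0 := by
        simp only [hd, hT]
        field_simp
        ring
      have hdnn : ∀ z ∈ X, 0 ≤ d z := by
        intro z hz
        have h1 : -f z / μ z ≤ T := hbmax z hz
        have h2 : -f z ≤ T * μ z := by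
          rw [div_le_iff₀ (hμ z hz)] at h1; linarith
        simp only [hd]; linarith
      refine ⟨b, hb, X.erase b, d, ?_, ?_, ?_⟩
      · rw [Finset.coe_erase]
      · intro z hz; exact hdnn z (Finset.mem_of_mem_erase hz)
      · rw [Finset.sum_erase _ (by rw [hdb, zero_smul])]
        have hsplit : ∑ z ∈ X, d z • z = ∑ z ∈ X, f z • z + T • ∑ z ∈ X, μ z • z := by
          rw [Finset.smul_sum, ← Finset.sum_add_distrib]
          refine Finset.sum_congr rfl fun z hz => ?_
          simp [hd, add_smul, smul_smul]
        rw [hsplit, hzero, smul_zero, add_zero, hf]
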